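/- First linear-dependence alternative (proof of Theorem 3.1): in the S⁴ frame setup, if E ∈ ℝ⁵ is a constant vector such that cosh θ(z) · ψ₄(z) + E^⊥(z) = 0 for all z ∈ ℂ, then i θ_z = −2 e^{−2ρ} ⟨E, f_{z̄}⟩ and i (θ_{zz} + 2 ρ_z θ_z) = ⟨E, f⟩ pointwise; in particular the function θ_{zz} + 2 ρ_z θ_z is purely imaginary at every point. -/

import Mathlib

open Complex

noncomputable section

/-- Wirtinger derivative `∂_z` of a map `ℂ → ℂ`. -/
def wirtZ (g : ℂ → ℂ) (z : ℂ) : ℂ :=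
  (1 / 2 : ℂ) * (fderiv ℝ g z 1 - Complex.I * fderiv ℝ g z Complex.I)

/-- Wirtinger derivative `∂_z̄` of a map `ℂ → ℂ`. -/
def wirtZbar (g : ℂ → ℂ) (z : ℂ) : ℂ :=
  (1 / 2 : ℂ) * (fderiv ℝ g z 1 + Complex.I * fderiv ℝ g z Complex.I)

/-- Componentwise `∂_z` for vector-valued maps. -/
def WZ {m : ℕ} (g : ℂ → Fin m → ℂ) : ℂ → Fin m → ℂ :=
  fun z i => wirtZ (fun w => g w i) z

/-- Componentwise `∂_z̄` for vector-valued maps. -/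
def WZb {m : ℕ} (g : ℂ → Fin m → ℂ) : ℂ → Fin m → ℂ :=
  fun z i => wirtZbar (fun w => g w i) z

/-- Complex-bilinear (non-conjugating) pairing. -/
def pairC {m : ℕ} (u v : Fin m → ℂ) : ℂ := ∑ i, u i * v i

/-- Componentwise complex conjugation. -/
def conjV {m : ℕ} (u : Fin m → ℂ) : Fin m → ℂ := fun i => (starRingEnd ℂ) (u i)

/-- Complexification of a real vector. -/
def cV {m : ℕ} (u : Fin m → ℝ) : Fin m → ℂ := fun i => (u i : ℂ)

/-- Complexification of a real-vector-valued map. -/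
def Fc {m : ℕ} (f : ℂ → Fin m → ℝ) : ℂ → Fin m → ℂ := fun z => cV (f z)

/-- `∂_z` of (the complexification of) a real-valued function. -/
def dZ (ρ : ℂ → ℝ) (z : ℂ) : ℂ := wirtZ (fun w => ((ρ w : ℝ) : ℂ)) z

/-- `f : ℂ → S^n ⊂ ℝ^{n+1}` is a conformal minimal immersion with conformal factor `ρ`:
`⟨f_z, f_z⟩ = 0`, `⟨f_z, f̄_z⟩ = (1/2) e^{2ρ}`, and `f_{z z̄} = −(1/2) e^{2ρ} f`. -/
def IsConfMinImm {m : ℕ} (f : ℂ → Fin m → ℝ) (ρ : ℂ → ℝ) : Prop :=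
  ContDiff ℝ (⊤ : ℕ∞) f ∧ ContDiff ℝ (⊤ : ℕ∞) ρ ∧
  (∀ z, ∑ i, (f z i) ^ 2 = 1) ∧
  (∀ z, pairC (WZ (Fc f) z) (WZ (Fc f) z) = 0) ∧
  (∀ z, pairC (WZ (Fc f) z) (conjV (WZ (Fc f) z)) = (1 / 2 : ℂ) * (Real.exp (2 * ρ z) : ℂ)) ∧
  (∀ z i, WZb (WZ (Fc f)) z i = -(1 / 2 : ℂ) * (Real.exp (2 * ρ z) : ℂ) * Fc f z i)

/-- The Hopf field `Ω = f_{zz} − 2 ρ_z f_z`. -/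
def Hopf {m : ℕ} (f : ℂ → Fin m → ℝ) (ρ : ℂ → ℝ) : ℂ → Fin m → ℂ :=
  fun z i => WZ (WZ (Fc f)) z i - 2 * dZ ρ z * WZ (Fc f) z i

/-- Real part `Ω₁` of the Hopf field, viewed in `ℂ^{n+1}`. -/
def HopfRe {m : ℕ} (f : ℂ → Fin m → ℝ) (ρ : ℂ → ℝ) : ℂ → Fin m → ℂ :=
  fun z i => ((Hopf f ρ z i).re : ℂ)

/-- Imaginary part `Ω₂` of the Hopf field, viewed in `ℂ^{n+1}`. -/
def HopfIm {m : ℕ} (f : ℂ → Fin m → ℝ) (ρ : ℂ → ℝ) : ℂ → Fin m → ℂ :=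
  fun z i => ((Hopf f ρ z i).im : ℂ)

/-- Normal projection `E^⊥` of a constant vector `E ∈ ℝ^{n+1}`. -/
def Eperp {m : ℕ} (f : ℂ → Fin m → ℝ) (ρ : ℂ → ℝ) (E : Fin m → ℝ) : ℂ → Fin m → ℂ :=
  fun z i => (E i : ℂ) - pairC (cV E) (Fc f z) * Fc f z i
    - 2 * (Real.exp (-2 * ρ z) : ℂ) * pairC (cV E) (WZ (Fc f) z) * WZb (Fc f) z i
    - 2 * (Real.exp (-2 * ρ z) : ℂ) * pairC (cV E) (WZb (Fc f) z) * WZ (Fc f) z i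

/-- `ψ` is a normal field along `f`. -/
def IsNormalField {m : ℕ} (f : ℂ → Fin m → ℝ) (ψ : ℂ → Fin m → ℂ) : Prop :=
  ∀ z, pairC (ψ z) (Fc f z) = 0 ∧ pairC (ψ z) (WZ (Fc f) z) = 0 ∧
    pairC (ψ z) (WZb (Fc f) z) = 0

/-- Normal covariant derivative `N_z ψ = ψ_z + 2 e^{−2ρ} ⟨ψ, Ω⟩ f_z̄`. -/
def NZ {m : ℕ} (f : ℂ → Fin m → ℝ) (ρ : ℂ → ℝ) (ψ : ℂ → Fin m → ℂ) : ℂ → Fin m → ℂ :=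
  fun z i => WZ ψ z i
    + 2 * (Real.exp (-2 * ρ z) : ℂ) * pairC (ψ z) (Hopf f ρ z) * WZb (Fc f) z i

/-- Normal covariant derivative `N_z̄ ψ = ψ_z̄ + 2 e^{−2ρ} ⟨ψ, Ω̄⟩ f_z`. -/
def NZb {m : ℕ} (f : ℂ → Fin m → ℝ) (ρ : ℂ → ℝ) (ψ : ℂ → Fin m → ℂ) : ℂ → Fin m → ℂ :=
  fun z i => WZb ψ z i
    + 2 * (Real.exp (-2 * ρ z) : ℂ) * pairC (ψ z) (conjV (Hopf f ρ z)) * WZ (Fc f) z i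

/-- Normal Laplacian `Δ^⊥ ψ = 2 e^{−2ρ} (N_z̄ (N_z ψ) + N_z (N_z̄ ψ))`. -/
def LapPerp {m : ℕ} (f : ℂ → Fin m → ℝ) (ρ : ℂ → ℝ) (ψ : ℂ → Fin m → ℂ) : ℂ → Fin m → ℂ :=
  fun z i => 2 * (Real.exp (-2 * ρ z) : ℂ) * (NZb f ρ (NZ f ρ ψ) z i + NZ f ρ (NZb f ρ ψ) z i)

/-- Jacobi operator `𝓛 ψ = Δ^⊥ ψ + 2 ψ + 4 e^{−4ρ} (⟨ψ, Ω⟩ Ω̄ + ⟨ψ, Ω̄⟩ Ω)`. -/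
def Jacobi {m : ℕ} (f : ℂ → Fin m → ℝ) (ρ : ℂ → ℝ) (ψ : ℂ → Fin m → ℂ) : ℂ → Fin m → ℂ :=
  fun z i => LapPerp f ρ ψ z i + 2 * ψ z i
    + 4 * (Real.exp (-4 * ρ z) : ℂ) *
      (pairC (ψ z) (Hopf f ρ z) * conjV (Hopf f ρ z) i
        + pairC (ψ z) (conjV (Hopf f ρ z)) * Hopf f ρ z i)

/-- The S⁴ adapted frame setup: `⟨Ω, Ω⟩ ≡ 1`, `Ω₁ = cosh θ · ψ₃`, `Ω₂ = sinh θ · ψ₄`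
with `ψ₃, ψ₄` orthonormal normal fields. -/
def S4Frame (f : ℂ → Fin 5 → ℝ) (ρ : ℂ → ℝ) (ψ₃ ψ₄ : ℂ → Fin 5 → ℝ) (θ : ℂ → ℝ) : Prop :=
  ContDiff ℝ (⊤ : ℕ∞) ψ₃ ∧ ContDiff ℝ (⊤ : ℕ∞) ψ₄ ∧ ContDiff ℝ (⊤ : ℕ∞) θ ∧
  IsNormalField f (Fc ψ₃) ∧ IsNormalField f (Fc ψ₄) ∧
  (∀ z, ∑ i, (ψ₃ z i) ^ 2 = 1) ∧ (∀ z, ∑ i, (ψ₄ z i) ^ 2 = 1) ∧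
  (∀ z, ∑ i, ψ₃ z i * ψ₄ z i = 0) ∧
  (∀ z, pairC (Hopf f ρ z) (Hopf f ρ z) = 1) ∧
  (∀ z i, (Hopf f ρ z i).re = Real.cosh (θ z) * ψ₃ z i) ∧
  (∀ z i, (Hopf f ρ z i).im = Real.sinh (θ z) * ψ₄ z i)


open ContDiff





lemma inf_le_top' : (∞ : WithTop ℕ∞) ≤ ⊤ := le_top
lemma one_le_inf : (1 : WithTop ℕ∞) ≤ ∞ := by simp
lemma two_le_inf : (2 : WithTop ℕ∞) ≤ ∞ := by decide
lemma inf_add_one : (∞ : WithTop ℕ∞) + 1 ≤ ∞ := by decide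

lemma ContDiff.dAt {g : ℂ → ℂ} (h : ContDiff ℝ ∞ g) (z : ℂ) : DifferentiableAt ℝ g z :=
  (h.differentiable (by simp)).differentiableAt

lemma ContDiffR.dAt {g : ℂ → ℝ} (h : ContDiff ℝ ∞ g) (z : ℂ) : DifferentiableAt ℝ g z :=
  (h.differentiable (by simp)).differentiableAt

-- fderiv applied at fixed vector, smoothness
lemma contDiff_fderiv_apply {g : ℂ → ℂ} (hg : ContDiff ℝ ∞ g) (v : ℂ) :
    ContDiff ℝ ∞ (fun z => fderiv ℝ g z v) :=
  (hg.fderiv_right inf_add_one).clm_apply contDiff_const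

lemma contDiff_wirtZ {g : ℂ → ℂ} (hg : ContDiff ℝ ∞ g) : ContDiff ℝ ∞ (wirtZ g) := by
  unfold wirtZ
  exact contDiff_const.mul ((contDiff_fderiv_apply hg 1).sub
    (contDiff_const.mul (contDiff_fderiv_apply hg Complex.I)))

lemma contDiff_wirtZbar {g : ℂ → ℂ} (hg : ContDiff ℝ ∞ g) : ContDiff ℝ ∞ (wirtZbar g) := by
  unfold wirtZbar
  exact contDiff_const.mul ((contDiff_fderiv_apply hg 1).add
    (contDiff_const.mul (contDiff_fderiv_apply hg Complex.I)))

-- arithmetic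
lemma wirtZ_add {g h : ℂ → ℂ} {z : ℂ} (hg : DifferentiableAt ℝ g z)
    (hh : DifferentiableAt ℝ h z) :
    wirtZ (fun w => g w + h w) z = wirtZ g z + wirtZ h z := by
  unfold wirtZ; rw [fderiv_fun_add hg hh]; simp; ring

lemma wirtZbar_add {g h : ℂ → ℂ} {z : ℂ} (hg : DifferentiableAt ℝ g z)
    (hh : DifferentiableAt ℝ h z) :
    wirtZbar (fun w => g w + h w) z = wirtZbar g z + wirtZbar h z := by
  unfold wirtZbar; rw [fderiv_fun_add hg hh]; simp; ring

lemma wirtZ_mul {g h : ℂ → ℂ} {z : ℂ} (hg : DifferentiableAt ℝ g z)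
    (hh : DifferentiableAt ℝ h z) :
    wirtZ (fun w => g w * h w) z = wirtZ g z * h z + g z * wirtZ h z := by
  unfold wirtZ; rw [fderiv_fun_mul hg hh]; simp; ring

lemma wirtZbar_mul {g h : ℂ → ℂ} {z : ℂ} (hg : DifferentiableAt ℝ g z)
    (hh : DifferentiableAt ℝ h z) :
    wirtZbar (fun w => g w * h w) z = wirtZbar g z * h z + g z * wirtZbar h z := by
  unfold wirtZbar; rw [fderiv_fun_mul hg hh]; simp; ring

lemma wirtZ_const (c : ℂ) (z : ℂ) : wirtZ (fun _ => c) z = 0 := by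
  unfold wirtZ; simp

lemma wirtZbar_const (c : ℂ) (z : ℂ) : wirtZbar (fun _ => c) z = 0 := by
  unfold wirtZbar; simp

lemma wirtZ_const_mul {g : ℂ → ℂ} {z : ℂ} (c : ℂ) (hg : DifferentiableAt ℝ g z) :
    wirtZ (fun w => c * g w) z = c * wirtZ g z := by
  rw [wirtZ_mul (differentiableAt_const c) hg, wirtZ_const]; ring

lemma wirtZbar_const_mul {g : ℂ → ℂ} {z : ℂ} (c : ℂ) (hg : DifferentiableAt ℝ g z) :
    wirtZbar (fun w => c * g w) z = c * wirtZbar g z := by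
  rw [wirtZbar_mul (differentiableAt_const c) hg, wirtZbar_const]; ring

lemma wirtZ_sum {n : ℕ} {g : Fin n → ℂ → ℂ} {z : ℂ}
    (hg : ∀ i, DifferentiableAt ℝ (g i) z) :
    wirtZ (fun w => ∑ i, g i w) z = ∑ i, wirtZ (g i) z := by
  unfold wirtZ; rw [fderiv_fun_sum (fun i _ => hg i)]
  simp only [ContinuousLinearMap.sum_apply, Finset.mul_sum, ← Finset.sum_sub_distrib]

lemma wirtZbar_sum {n : ℕ} {g : Fin n → ℂ → ℂ} {z : ℂ}
    (hg : ∀ i, DifferentiableAt ℝ (g i) z) :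
    wirtZbar (fun w => ∑ i, g i w) z = ∑ i, wirtZbar (g i) z := by
  unfold wirtZbar; rw [fderiv_fun_sum (fun i _ => hg i)]
  simp only [ContinuousLinearMap.sum_apply, Finset.mul_sum, ← Finset.sum_add_distrib]

lemma fderiv_ofReal_comp {u : ℂ → ℝ} {z : ℂ} (hu : DifferentiableAt ℝ u z) (v : ℂ) :
    fderiv ℝ (fun w => ((u w : ℝ) : ℂ)) z v = ((fderiv ℝ u z v : ℝ) : ℂ) := by
  have : HasFDerivAt (fun w => ((u w : ℝ) : ℂ))
      (Complex.ofRealCLM.comp (fderiv ℝ u z)) z :=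
    Complex.ofRealCLM.hasFDerivAt.comp z hu.hasFDerivAt
  rw [this.fderiv]; rfl

lemma conj_wirtZ_real {u : ℂ → ℝ} {z : ℂ} (hu : DifferentiableAt ℝ u z) :
    (starRingEnd ℂ) (wirtZ (fun w => ((u w : ℝ) : ℂ)) z)
      = wirtZbar (fun w => ((u w : ℝ) : ℂ)) z := by
  unfold wirtZ wirtZbar
  rw [fderiv_ofReal_comp hu 1, fderiv_ofReal_comp hu Complex.I]
  simp only [map_mul, map_sub, map_one, map_div₀, map_ofNat, Complex.conj_ofReal, Complex.conj_I]
  ring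

lemma conj_wirtZbar_real {u : ℂ → ℝ} {z : ℂ} (hu : DifferentiableAt ℝ u z) :
    (starRingEnd ℂ) (wirtZbar (fun w => ((u w : ℝ) : ℂ)) z)
      = wirtZ (fun w => ((u w : ℝ) : ℂ)) z := by
  rw [← conj_wirtZ_real hu, Complex.conj_conj]

lemma wirtZ_comp_real {u : ℂ → ℝ} {σ : ℝ → ℝ} {z : ℂ} (hu : DifferentiableAt ℝ u z)
    {d : ℝ} (hσ : HasDerivAt σ d (u z)) :
    wirtZ (fun w => ((σ (u w) : ℝ) : ℂ)) z = (d : ℂ) * wirtZ (fun w => ((u w : ℝ) : ℂ)) z := by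
  have hc : DifferentiableAt ℝ (fun w => σ (u w)) z :=
    (hσ.differentiableAt).comp z hu
  have hder : ∀ v : ℂ, fderiv ℝ (fun w => σ (u w)) z v = d * fderiv ℝ u z v := by
    intro v
    have : HasFDerivAt (fun w => σ (u w)) (d • fderiv ℝ u z) z :=
      hσ.comp_hasFDerivAt z hu.hasFDerivAt
    rw [this.fderiv]; simp
  unfold wirtZ
  rw [fderiv_ofReal_comp hc 1, fderiv_ofReal_comp hc Complex.I,
    fderiv_ofReal_comp hu 1, fderiv_ofReal_comp hu Complex.I, hder 1, hder Complex.I]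
  push_cast; ring

lemma wirtZbar_comp_real {u : ℂ → ℝ} {σ : ℝ → ℝ} {z : ℂ} (hu : DifferentiableAt ℝ u z)
    {d : ℝ} (hσ : HasDerivAt σ d (u z)) :
    wirtZbar (fun w => ((σ (u w) : ℝ) : ℂ)) z = (d : ℂ) * wirtZbar (fun w => ((u w : ℝ) : ℂ)) z := by
  have hc : DifferentiableAt ℝ (fun w => σ (u w)) z :=
    (hσ.differentiableAt).comp z hu
  have hder : ∀ v : ℂ, fderiv ℝ (fun w => σ (u w)) z v = d * fderiv ℝ u z v := by
    intro v
    have : HasFDerivAt (fun w => σ (u w)) (d • fderiv ℝ u z) z :=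
      hσ.comp_hasFDerivAt z hu.hasFDerivAt
    rw [this.fderiv]; simp
  unfold wirtZbar
  rw [fderiv_ofReal_comp hc 1, fderiv_ofReal_comp hc Complex.I,
    fderiv_ofReal_comp hu 1, fderiv_ofReal_comp hu Complex.I, hder 1, hder Complex.I]
  push_cast; ring

lemma fderiv_wirt_aux {g : ℂ → ℂ} (hg : ContDiff ℝ ∞ g) (z v w : ℂ) :
    fderiv ℝ (fun y => fderiv ℝ g y v) z w = fderiv ℝ (fderiv ℝ g) z w v := by
  have hD : DifferentiableAt ℝ (fderiv ℝ g) z :=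
    (((hg.fderiv_right inf_add_one)).differentiable (by simp)) z
  have : HasFDerivAt (fun y => fderiv ℝ g y v)
      ((ContinuousLinearMap.apply ℝ ℂ v).comp (fderiv ℝ (fderiv ℝ g) z)) z :=
    (ContinuousLinearMap.apply ℝ ℂ v).hasFDerivAt.comp z hD.hasFDerivAt
  rw [this.fderiv]; rfl

lemma wirt_comm {g : ℂ → ℂ} (hg : ContDiff ℝ ∞ g) (z : ℂ) :
    wirtZ (wirtZbar g) z = wirtZbar (wirtZ g) z := by
  have symm : IsSymmSndFDerivAt ℝ g z :=
    hg.contDiffAt.isSymmSndFDerivAt (by rw [minSmoothness_of_isRCLikeNormedField]; decide)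
  have d1 : DifferentiableAt ℝ (fun y => fderiv ℝ g y 1) z :=
    ((contDiff_fderiv_apply hg 1).differentiable (by simp)) z
  have dI : DifferentiableAt ℝ (fun y => fderiv ℝ g y Complex.I) z :=
    ((contDiff_fderiv_apply hg Complex.I).differentiable (by simp)) z
  have hb : ∀ w : ℂ, fderiv ℝ (wirtZbar g) z w
      = (1/2 : ℂ) * (fderiv ℝ (fderiv ℝ g) z w 1 + Complex.I * fderiv ℝ (fderiv ℝ g) z w Complex.I) := by
    intro w
    unfold wirtZbar
    rw [fderiv_const_mul (d1.fun_add (dI.const_mul Complex.I)) ((1/2 : ℂ)),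
      fderiv_fun_add d1 (dI.const_mul Complex.I), fderiv_const_mul dI Complex.I]
    simp [fderiv_wirt_aux hg]
    ring
  have ha : ∀ w : ℂ, fderiv ℝ (wirtZ g) z w
      = (1/2 : ℂ) * (fderiv ℝ (fderiv ℝ g) z w 1 - Complex.I * fderiv ℝ (fderiv ℝ g) z w Complex.I) := by
    intro w
    unfold wirtZ
    rw [fderiv_const_mul (d1.fun_sub (dI.const_mul Complex.I)) ((1/2 : ℂ)),
      fderiv_fun_sub d1 (dI.const_mul Complex.I), fderiv_const_mul dI Complex.I]
    simp [fderiv_wirt_aux hg]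
  have e1 : wirtZ (wirtZbar g) z = (1/2 : ℂ) * (fderiv ℝ (wirtZbar g) z 1
      - Complex.I * fderiv ℝ (wirtZbar g) z Complex.I) := rfl
  have e2 : wirtZbar (wirtZ g) z = (1/2 : ℂ) * (fderiv ℝ (wirtZ g) z 1
      + Complex.I * fderiv ℝ (wirtZ g) z Complex.I) := rfl
  rw [e1, e2, hb 1, hb Complex.I, ha 1, ha Complex.I, symm 1 Complex.I]
  ring

lemma wirtZ_neg {g : ℂ → ℂ} {z : ℂ} :
    wirtZ (fun w => -(g w)) z = -wirtZ g z := by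
  unfold wirtZ; rw [fderiv_fun_neg]; simp; ring

lemma wirtZbar_neg {g : ℂ → ℂ} {z : ℂ} :
    wirtZbar (fun w => -(g w)) z = -wirtZbar g z := by
  unfold wirtZbar; rw [fderiv_fun_neg]; simp; ring

lemma wirtZ_sub {g h : ℂ → ℂ} {z : ℂ} (hg : DifferentiableAt ℝ g z)
    (hh : DifferentiableAt ℝ h z) :
    wirtZ (fun w => g w - h w) z = wirtZ g z - wirtZ h z := by
  unfold wirtZ; rw [fderiv_fun_sub hg hh]; simp; ring

lemma wirtZbar_sub {g h : ℂ → ℂ} {z : ℂ} (hg : DifferentiableAt ℝ g z)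
    (hh : DifferentiableAt ℝ h z) :
    wirtZbar (fun w => g w - h w) z = wirtZbar g z - wirtZbar h z := by
  unfold wirtZbar; rw [fderiv_fun_sub hg hh]; simp; ring

lemma contDiff_ofReal_comp {u : ℂ → ℝ} (hu : ContDiff ℝ ∞ u) :
    ContDiff ℝ ∞ (fun z => ((u z : ℝ) : ℂ)) :=
  Complex.ofRealCLM.contDiff.comp hu

lemma pairC_comm' {m : ℕ} (u v : Fin m → ℂ) : pairC u v = pairC v u := by
  unfold pairC; exact Finset.sum_congr rfl fun i _ => mul_comm _ _

lemma pairC_smul_right {m : ℕ} (c : ℂ) (u v : Fin m → ℂ) :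
    pairC u (fun i => c * v i) = c * pairC u v := by
  unfold pairC; rw [Finset.mul_sum]; exact Finset.sum_congr rfl fun i _ => by ring

lemma wirtZ_pairC {m : ℕ} {g h : ℂ → Fin m → ℂ} {z : ℂ}
    (hg : ∀ i, DifferentiableAt ℝ (fun w => g w i) z)
    (hh : ∀ i, DifferentiableAt ℝ (fun w => h w i) z) :
    wirtZ (fun w => pairC (g w) (h w)) z = pairC (WZ g z) (h z) + pairC (g z) (WZ h z) := by
  calc wirtZ (fun w => pairC (g w) (h w)) z
      = ∑ i, wirtZ (fun w => g w i * h w i) z := wirtZ_sum fun i => (hg i).mul (hh i)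
    _ = ∑ i, (wirtZ (fun w => g w i) z * h z i + g z i * wirtZ (fun w => h w i) z) :=
        Finset.sum_congr rfl fun i _ => wirtZ_mul (hg i) (hh i)
    _ = _ := by rw [Finset.sum_add_distrib]; rfl

lemma wirtZbar_pairC {m : ℕ} {g h : ℂ → Fin m → ℂ} {z : ℂ}
    (hg : ∀ i, DifferentiableAt ℝ (fun w => g w i) z)
    (hh : ∀ i, DifferentiableAt ℝ (fun w => h w i) z) :
    wirtZbar (fun w => pairC (g w) (h w)) z = pairC (WZb g z) (h z) + pairC (g z) (WZb h z) := by
  calc wirtZbar (fun w => pairC (g w) (h w)) z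
      = ∑ i, wirtZbar (fun w => g w i * h w i) z := wirtZbar_sum fun i => (hg i).mul (hh i)
    _ = ∑ i, (wirtZbar (fun w => g w i) z * h z i + g z i * wirtZbar (fun w => h w i) z) :=
        Finset.sum_congr rfl fun i _ => wirtZbar_mul (hg i) (hh i)
    _ = _ := by rw [Finset.sum_add_distrib]; rfl

lemma sum_comb6 {m : ℕ} (c1 c2 c3 c4 c5 c6 : ℂ) (u1 u2 u3 u4 u5 u6 v : Fin m → ℂ) :
    ∑ i, (c1 * u1 i + c2 * u2 i + c3 * u3 i + c4 * u4 i + c5 * u5 i + c6 * u6 i) * v i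
      = c1 * pairC u1 v + c2 * pairC u2 v + c3 * pairC u3 v
        + c4 * pairC u4 v + c5 * pairC u5 v + c6 * pairC u6 v := by
  unfold pairC
  rw [Finset.mul_sum, Finset.mul_sum, Finset.mul_sum, Finset.mul_sum, Finset.mul_sum,
    Finset.mul_sum, ← Finset.sum_add_distrib, ← Finset.sum_add_distrib,
    ← Finset.sum_add_distrib, ← Finset.sum_add_distrib, ← Finset.sum_add_distrib]
  exact Finset.sum_congr rfl fun i _ => by ring

lemma sum_comb2 {m : ℕ} (c1 c2 : ℂ) (u1 u2 v : Fin m → ℂ) :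
    ∑ i, (c1 * u1 i + c2 * u2 i) * v i = c1 * pairC u1 v + c2 * pairC u2 v := by
  unfold pairC
  rw [Finset.mul_sum, Finset.mul_sum, ← Finset.sum_add_distrib]
  exact Finset.sum_congr rfl fun i _ => by ring

lemma sum_comb4 {m : ℕ} (c1 c2 c3 c4 : ℂ) (u1 u2 u3 u4 v : Fin m → ℂ) :
    ∑ i, (c1 * u1 i + c2 * u2 i + c3 * u3 i + c4 * u4 i) * v i
      = c1 * pairC u1 v + c2 * pairC u2 v + c3 * pairC u3 v + c4 * pairC u4 v := by
  unfold pairC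
  rw [Finset.mul_sum, Finset.mul_sum, Finset.mul_sum, Finset.mul_sum,
    ← Finset.sum_add_distrib, ← Finset.sum_add_distrib, ← Finset.sum_add_distrib]
  exact Finset.sum_congr rfl fun i _ => by ring

lemma ofReal_pair {m : ℕ} (u v : Fin m → ℝ) :
    (∑ i, ((u i : ℝ) : ℂ) * ((v i : ℝ) : ℂ)) = ((∑ i, u i * v i : ℝ) : ℂ) := by
  push_cast; rfl

set_option maxHeartbeats 1000000 in
/-- first linear-dependence alternative in the proof of Theorem 3.1. -/
theorem first_dependence_alternative (f : ℂ → Fin 5 → ℝ) (ρ : ℂ → ℝ)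
    (hf : IsConfMinImm f ρ)
    (ψ₃ ψ₄ : ℂ → Fin 5 → ℝ) (θ : ℂ → ℝ) (hframe : S4Frame f ρ ψ₃ ψ₄ θ)
    (E : Fin 5 → ℝ)
    (hE : ∀ (z : ℂ) (i : Fin 5),
      ((Real.cosh (θ z) : ℝ) : ℂ) * ((ψ₄ z i : ℝ) : ℂ) + Eperp f ρ E z i = 0) :
    ∀ z : ℂ,
      Complex.I * dZ θ z = -2 * (Real.exp (-2 * ρ z) : ℂ) * pairC (cV E) (WZb (Fc f) z) ∧
      Complex.I * (wirtZ (dZ θ) z + 2 * dZ ρ z * dZ θ z) = pairC (cV E) (Fc f z) ∧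
      (wirtZ (dZ θ) z + 2 * dZ ρ z * dZ θ z).re = 0 := by
  obtain ⟨hfS, hρS, hnorm, hconf, hmet0, hmin⟩ := hf
  obtain ⟨h3S, h4S, hθS, h3n, h4n, h33, h44, h34, hΩΩ, hRe, hIm⟩ := hframe
  -- ## smoothness bookkeeping
  have hfsm : ContDiff ℝ ∞ f := hfS.of_le (by simp)
  have hρsm : ContDiff ℝ ∞ ρ := hρS.of_le (by simp)
  have hθsm : ContDiff ℝ ∞ θ := hθS.of_le (by simp)
  have h3sm : ContDiff ℝ ∞ ψ₃ := h3S.of_le (by simp)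
  have h4sm : ContDiff ℝ ∞ ψ₄ := h4S.of_le (by simp)
  have hfi : ∀ i, ContDiff ℝ ∞ (fun z => f z i) := fun i => (contDiff_pi.mp hfsm) i
  have h3i : ∀ i, ContDiff ℝ ∞ (fun z => ψ₃ z i) := fun i => (contDiff_pi.mp h3sm) i
  have h4i : ∀ i, ContDiff ℝ ∞ (fun z => ψ₄ z i) := fun i => (contDiff_pi.mp h4sm) i
  have hF : ∀ i, ContDiff ℝ ∞ (fun z => Fc f z i) := fun i => contDiff_ofReal_comp (hfi i)
  have hFz : ∀ i, ContDiff ℝ ∞ (fun z => WZ (Fc f) z i) := fun i => contDiff_wirtZ (hF i)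
  have hFzb : ∀ i, ContDiff ℝ ∞ (fun z => WZb (Fc f) z i) := fun i => contDiff_wirtZbar (hF i)
  have hFzz : ∀ i, ContDiff ℝ ∞ (fun z => WZ (WZ (Fc f)) z i) := fun i => contDiff_wirtZ (hFz i)
  have hP3 : ∀ i, ContDiff ℝ ∞ (fun z => Fc ψ₃ z i) := fun i => contDiff_ofReal_comp (h3i i)
  have hP4 : ∀ i, ContDiff ℝ ∞ (fun z => Fc ψ₄ z i) := fun i => contDiff_ofReal_comp (h4i i)
  have hρc : ContDiff ℝ ∞ (fun z => ((ρ z : ℝ) : ℂ)) := contDiff_ofReal_comp hρsm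
  have hθc : ContDiff ℝ ∞ (fun z => ((θ z : ℝ) : ℂ)) := contDiff_ofReal_comp hθsm
  have hdρ : ContDiff ℝ ∞ (dZ ρ) := contDiff_wirtZ hρc
  have hdθ : ContDiff ℝ ∞ (dZ θ) := contDiff_wirtZ hθc
  have hex : ContDiff ℝ ∞ (fun z => ((Real.exp (-2 * ρ z) : ℝ) : ℂ)) :=
    contDiff_ofReal_comp (Real.contDiff_exp.comp (contDiff_const.mul hρsm))
  have he2 : ContDiff ℝ ∞ (fun z => ((Real.exp (2 * ρ z) : ℝ) : ℂ)) :=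
    contDiff_ofReal_comp (Real.contDiff_exp.comp (contDiff_const.mul hρsm))
  have hcosh : ContDiff ℝ ∞ (fun z => ((Real.cosh (θ z) : ℝ) : ℂ)) :=
    contDiff_ofReal_comp (Real.contDiff_cosh.comp hθsm)
  have hsinh : ContDiff ℝ ∞ (fun z => ((Real.sinh (θ z) : ℝ) : ℂ)) :=
    contDiff_ofReal_comp (Real.contDiff_sinh.comp hθsm)
  have haC : ContDiff ℝ ∞ (fun z => pairC (cV E) (Fc f z)) :=
    ContDiff.sum fun i _ => contDiff_const.mul (hF i)
  have ha1C : ContDiff ℝ ∞ (fun z => pairC (cV E) (WZ (Fc f) z)) :=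
    ContDiff.sum fun i _ => contDiff_const.mul (hFz i)
  have ha2C : ContDiff ℝ ∞ (fun z => pairC (cV E) (WZb (Fc f) z)) :=
    ContDiff.sum fun i _ => contDiff_const.mul (hFzb i)
  -- ## chain rules for scalar factors
  have hwe2 : ∀ z, wirtZ (fun w => ((Real.exp (2 * ρ w) : ℝ) : ℂ)) z
      = 2 * (Real.exp (2 * ρ z) : ℂ) * dZ ρ z := by
    intro z
    have hσ : HasDerivAt (fun t : ℝ => Real.exp (2 * t)) (Real.exp (2 * ρ z) * 2) (ρ z) := by
      simpa using (((hasDerivAt_id (ρ z)).const_mul (2 : ℝ)).exp)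
    have h := wirtZ_comp_real (ContDiffR.dAt hρsm z) hσ
    rw [h]; push_cast; unfold dZ; ring
  have hwex : ∀ z, wirtZ (fun w => ((Real.exp (-2 * ρ w) : ℝ) : ℂ)) z
      = -2 * (Real.exp (-2 * ρ z) : ℂ) * dZ ρ z := by
    intro z
    have hσ : HasDerivAt (fun t : ℝ => Real.exp (-2 * t)) (Real.exp (-2 * ρ z) * (-2)) (ρ z) := by
      simpa using (((hasDerivAt_id (ρ z)).const_mul (-2 : ℝ)).exp)
    have h := wirtZ_comp_real (ContDiffR.dAt hρsm z) hσ
    rw [h]; push_cast; unfold dZ; ring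
  have hws : ∀ z, wirtZbar (fun w => ((Real.sinh (θ w) : ℝ) : ℂ)) z
      = (Real.cosh (θ z) : ℂ) * wirtZbar (fun w => ((θ w : ℝ) : ℂ)) z :=
    fun z => wirtZbar_comp_real (ContDiffR.dAt hθsm z) (Real.hasDerivAt_sinh (θ z))
  -- ## basic complexified pairings
  have hFF : ∀ z, pairC (Fc f z) (Fc f z) = 1 := by
    intro z
    calc pairC (Fc f z) (Fc f z) = ∑ i, ((f z i : ℂ) * (f z i : ℂ)) := rfl
      _ = ((∑ i, f z i * f z i : ℝ) : ℂ) := ofReal_pair _ _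
      _ = 1 := by
          rw [show (∑ i, f z i * f z i) = ∑ i, (f z i) ^ 2 from
            Finset.sum_congr rfl fun i _ => (sq _).symm, hnorm z]; norm_num
  have hP33 : ∀ z, pairC (Fc ψ₃ z) (Fc ψ₃ z) = 1 := by
    intro z
    calc pairC (Fc ψ₃ z) (Fc ψ₃ z) = ∑ i, ((ψ₃ z i : ℂ) * (ψ₃ z i : ℂ)) := rfl
      _ = ((∑ i, ψ₃ z i * ψ₃ z i : ℝ) : ℂ) := ofReal_pair _ _
      _ = 1 := by
          rw [show (∑ i, ψ₃ z i * ψ₃ z i) = ∑ i, (ψ₃ z i) ^ 2 from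
            Finset.sum_congr rfl fun i _ => (sq _).symm, h33 z]; norm_num
  have hP44 : ∀ z, pairC (Fc ψ₄ z) (Fc ψ₄ z) = 1 := by
    intro z
    calc pairC (Fc ψ₄ z) (Fc ψ₄ z) = ∑ i, ((ψ₄ z i : ℂ) * (ψ₄ z i : ℂ)) := rfl
      _ = ((∑ i, ψ₄ z i * ψ₄ z i : ℝ) : ℂ) := ofReal_pair _ _
      _ = 1 := by
          rw [show (∑ i, ψ₄ z i * ψ₄ z i) = ∑ i, (ψ₄ z i) ^ 2 from
            Finset.sum_congr rfl fun i _ => (sq _).symm, h44 z]; norm_num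
  have hP34 : ∀ z, pairC (Fc ψ₃ z) (Fc ψ₄ z) = 0 := by
    intro z
    calc pairC (Fc ψ₃ z) (Fc ψ₄ z) = ∑ i, ((ψ₃ z i : ℂ) * (ψ₄ z i : ℂ)) := rfl
      _ = ((∑ i, ψ₃ z i * ψ₄ z i : ℝ) : ℂ) := ofReal_pair _ _
      _ = 0 := by rw [h34 z]; norm_num
  have h3a : ∀ z, pairC (Fc ψ₃ z) (Fc f z) = 0 := fun z => (h3n z).1
  have h3b : ∀ z, pairC (Fc ψ₃ z) (WZ (Fc f) z) = 0 := fun z => (h3n z).2.1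
  have h3c : ∀ z, pairC (Fc ψ₃ z) (WZb (Fc f) z) = 0 := fun z => (h3n z).2.2
  have h4a : ∀ z, pairC (Fc ψ₄ z) (Fc f z) = 0 := fun z => (h4n z).1
  have h4b : ∀ z, pairC (Fc ψ₄ z) (WZ (Fc f) z) = 0 := fun z => (h4n z).2.1
  have h4c : ∀ z, pairC (Fc ψ₄ z) (WZb (Fc f) z) = 0 := fun z => (h4n z).2.2
  have hconjF : ∀ z, conjV (WZ (Fc f) z) = WZb (Fc f) z := by
    intro z; funext i
    exact conj_wirtZ_real (ContDiffR.dAt (hfi i) z)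
  have hmet : ∀ z, pairC (WZ (Fc f) z) (WZb (Fc f) z)
      = (1 / 2 : ℂ) * (Real.exp (2 * ρ z) : ℂ) := by
    intro z; rw [← hconjF z, hmet0 z]
  -- ## first-derivative tangency facts
  have hFzF : ∀ z, pairC (WZ (Fc f) z) (Fc f z) = 0 := by
    intro z
    have h0 : wirtZ (fun w => pairC (Fc f w) (Fc f w)) z = 0 := by
      rw [show (fun w => pairC (Fc f w) (Fc f w)) = fun _ => (1 : ℂ) from
        funext fun w => hFF w]
      exact wirtZ_const 1 z
    rw [wirtZ_pairC (fun i => (hF i).dAt z) (fun i => (hF i).dAt z),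
      pairC_comm' (Fc f z) (WZ (Fc f) z)] at h0
    linear_combination h0 / 2
  have hFzbF : ∀ z, pairC (WZb (Fc f) z) (Fc f z) = 0 := by
    intro z
    have h0 : wirtZbar (fun w => pairC (Fc f w) (Fc f w)) z = 0 := by
      rw [show (fun w => pairC (Fc f w) (Fc f w)) = fun _ => (1 : ℂ) from
        funext fun w => hFF w]
      exact wirtZbar_const 1 z
    rw [wirtZbar_pairC (fun i => (hF i).dAt z) (fun i => (hF i).dAt z),
      pairC_comm' (Fc f z) (WZb (Fc f) z)] at h0
    linear_combination h0 / 2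
  -- mixed second derivative
  have hWZWZb : ∀ z i, WZ (WZb (Fc f)) z i
      = -(1 / 2 : ℂ) * (Real.exp (2 * ρ z) : ℂ) * Fc f z i := by
    intro z i
    have h0 : WZ (WZb (Fc f)) z i = WZb (WZ (Fc f)) z i := wirt_comm (hF i) z
    rw [h0]; exact hmin z i
  -- pairing with the Hopf field, generic expansion
  have hΩv : ∀ z (v : Fin 5 → ℂ), pairC (Hopf f ρ z) v
      = pairC (WZ (WZ (Fc f)) z) v - 2 * dZ ρ z * pairC (WZ (Fc f) z) v := by
    intro z v
    calc pairC (Hopf f ρ z) v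
        = ∑ i, (WZ (WZ (Fc f)) z i * v i - 2 * dZ ρ z * (WZ (Fc f) z i * v i)) :=
          Finset.sum_congr rfl fun i _ => by unfold Hopf; ring
      _ = _ := by
          rw [Finset.sum_sub_distrib, ← Finset.mul_sum]; rfl
  -- second-derivative pairings
  have hWZWZ_F : ∀ z, pairC (WZ (WZ (Fc f)) z) (Fc f z) = 0 := by
    intro z
    have h0 : wirtZ (fun w => pairC (WZ (Fc f) w) (Fc f w)) z = 0 := by
      rw [show (fun w => pairC (WZ (Fc f) w) (Fc f w)) = fun _ => (0 : ℂ) from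
        funext fun w => hFzF w]
      exact wirtZ_const 0 z
    rw [wirtZ_pairC (fun i => (hFz i).dAt z) (fun i => (hF i).dAt z)] at h0
    linear_combination h0 - hconf z
  have hWZWZ_Fz : ∀ z, pairC (WZ (WZ (Fc f)) z) (WZ (Fc f) z) = 0 := by
    intro z
    have h0 : wirtZ (fun w => pairC (WZ (Fc f) w) (WZ (Fc f) w)) z = 0 := by
      rw [show (fun w => pairC (WZ (Fc f) w) (WZ (Fc f) w)) = fun _ => (0 : ℂ) from
        funext fun w => hconf w]
      exact wirtZ_const 0 z
    rw [wirtZ_pairC (fun i => (hFz i).dAt z) (fun i => (hFz i).dAt z),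
      pairC_comm' (WZ (Fc f) z) (WZ (WZ (Fc f)) z)] at h0
    linear_combination h0 / 2
  have hWZWZ_Fzb : ∀ z, pairC (WZ (WZ (Fc f)) z) (WZb (Fc f) z)
      = dZ ρ z * (Real.exp (2 * ρ z) : ℂ) := by
    intro z
    have h0 : wirtZ (fun w => pairC (WZ (Fc f) w) (WZb (Fc f) w)) z
        = dZ ρ z * (Real.exp (2 * ρ z) : ℂ) := by
      rw [show (fun w => pairC (WZ (Fc f) w) (WZb (Fc f) w))
          = fun w => (1 / 2 : ℂ) * ((Real.exp (2 * ρ w) : ℝ) : ℂ) from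
        funext fun w => hmet w]
      rw [wirtZ_const_mul _ (he2.dAt z), hwe2 z]; ring
    rw [wirtZ_pairC (fun i => (hFz i).dAt z) (fun i => (hFzb i).dAt z)] at h0
    have h1 : pairC (WZ (Fc f) z) (WZ (WZb (Fc f)) z) = 0 := by
      rw [show WZ (WZb (Fc f)) z
          = fun i => (-(1 / 2 : ℂ) * (Real.exp (2 * ρ z) : ℂ)) * Fc f z i from
        funext fun i => hWZWZb z i]
      rw [pairC_smul_right, hFzF z]; ring
    linear_combination h0 - h1
  have hΩF : ∀ z, pairC (Hopf f ρ z) (Fc f z) = 0 := by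
    intro z; rw [hΩv, hWZWZ_F z, hFzF z]; ring
  have hΩFz : ∀ z, pairC (Hopf f ρ z) (WZ (Fc f) z) = 0 := by
    intro z; rw [hΩv, hWZWZ_Fz z, hconf z]; ring
  have hΩFzb : ∀ z, pairC (Hopf f ρ z) (WZb (Fc f) z) = 0 := by
    intro z; rw [hΩv, hWZWZ_Fzb z, hmet z]; ring
  -- ## frame decomposition of the Hopf field
  have hΩdec : ∀ z i, Hopf f ρ z i
      = (Real.cosh (θ z) : ℂ) * Fc ψ₃ z i
        + Complex.I * ((Real.sinh (θ z) : ℂ) * Fc ψ₄ z i) := by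
    intro z i
    rw [← Complex.re_add_im (Hopf f ρ z i), hRe z i, hIm z i]
    simp only [Fc, cV]; push_cast; ring
  have hΩP3 : ∀ z, pairC (Hopf f ρ z) (Fc ψ₃ z) = (Real.cosh (θ z) : ℂ) := by
    intro z
    calc pairC (Hopf f ρ z) (Fc ψ₃ z)
        = ∑ i, ((Real.cosh (θ z) : ℂ) * Fc ψ₃ z i
            + (Complex.I * (Real.sinh (θ z) : ℂ)) * Fc ψ₄ z i) * Fc ψ₃ z i :=
          Finset.sum_congr rfl fun i _ => by rw [hΩdec z i]; ring
      _ = (Real.cosh (θ z) : ℂ) * pairC (Fc ψ₃ z) (Fc ψ₃ z)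
            + (Complex.I * (Real.sinh (θ z) : ℂ)) * pairC (Fc ψ₄ z) (Fc ψ₃ z) :=
          sum_comb2 _ _ _ _ _
      _ = (Real.cosh (θ z) : ℂ) := by
          rw [hP33 z, pairC_comm' (Fc ψ₄ z) (Fc ψ₃ z), hP34 z]; ring
  have eWZ : ∀ (g : ℂ → Fin 5 → ℂ) (z : ℂ) (i : Fin 5),
      wirtZ (fun w => g w i) z = WZ g z i := fun _ _ _ => rfl
  have eWZb : ∀ (g : ℂ → Fin 5 → ℂ) (z : ℂ) (i : Fin 5),
      wirtZbar (fun w => g w i) z = WZb g z i := fun _ _ _ => rfl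
  have pairC_def : ∀ (u v : Fin 5 → ℂ), pairC u v = ∑ i, u i * v i := fun _ _ => rfl
  have hconj3 : ∀ z i, (starRingEnd ℂ) (WZb (Fc ψ₃) z i) = WZ (Fc ψ₃) z i :=
    fun z i => conj_wirtZbar_real (ContDiffR.dAt (h3i i) z)
  have hconjθ : ∀ z, (starRingEnd ℂ) (wirtZbar (fun w => ((θ w : ℝ) : ℂ)) z) = dZ θ z :=
    fun z => conj_wirtZbar_real (ContDiffR.dAt hθsm z)
  -- ## Codazzi : ∂_z̄ Ω is tangential
  have hWZbΩ : ∀ z i, WZb (Hopf f ρ) z i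
      = -((1 / 2 : ℂ) * (Real.exp (2 * ρ z) : ℂ) + 2 * wirtZbar (dZ ρ) z) * WZ (Fc f) z i := by
    intro z i
    have e0 : WZb (Hopf f ρ) z i
        = wirtZbar (fun w => WZ (WZ (Fc f)) w i - 2 * dZ ρ w * WZ (Fc f) w i) z := rfl
    have d2 : DifferentiableAt ℝ (fun w => 2 * dZ ρ w * WZ (Fc f) w i) z :=
      ((contDiff_const.mul hdρ).mul (hFz i)).dAt z
    rw [e0, wirtZbar_sub ((hFzz i).dAt z) d2]
    have t1 : wirtZbar (fun w => WZ (WZ (Fc f)) w i) z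
        = -(dZ ρ z * (Real.exp (2 * ρ z) : ℂ) * Fc f z i)
          - (1 / 2 : ℂ) * (Real.exp (2 * ρ z) : ℂ) * WZ (Fc f) z i := by
      have c1 : wirtZbar (fun w => WZ (WZ (Fc f)) w i) z
          = wirtZ (fun w => WZb (WZ (Fc f)) w i) z := (wirt_comm (hFz i) z).symm
      rw [c1, show (fun w => WZb (WZ (Fc f)) w i)
          = fun w => -(1 / 2 : ℂ) * ((Real.exp (2 * ρ w) : ℝ) : ℂ) * Fc f w i from
          funext fun w => hmin w i]
      rw [wirtZ_mul ((contDiff_const.mul he2).dAt z) ((hF i).dAt z),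
        wirtZ_const_mul _ (he2.dAt z), hwe2 z]
      simp only [eWZ]
      ring
    have t2 : wirtZbar (fun w => 2 * dZ ρ w * WZ (Fc f) w i) z
        = 2 * wirtZbar (dZ ρ) z * WZ (Fc f) z i
          - dZ ρ z * (Real.exp (2 * ρ z) : ℂ) * Fc f z i := by
      rw [wirtZbar_mul ((contDiff_const.mul hdρ).dAt z) ((hFz i).dAt z),
        wirtZbar_const_mul 2 (hdρ.dAt z)]
      rw [show wirtZbar (fun w => WZ (Fc f) w i) z = WZb (WZ (Fc f)) z i from rfl, hmin z i]
      ring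
    rw [t1, t2]; ring
  have hCod : ∀ z, pairC (WZb (Hopf f ρ) z) (Fc ψ₄ z) = 0 := by
    intro z
    calc pairC (WZb (Hopf f ρ) z) (Fc ψ₄ z)
        = ∑ i, (-((1 / 2 : ℂ) * (Real.exp (2 * ρ z) : ℂ) + 2 * wirtZbar (dZ ρ) z))
            * (WZ (Fc f) z i * Fc ψ₄ z i) := by
          rw [pairC_def]
          exact Finset.sum_congr rfl fun i _ => by rw [hWZbΩ z i]; ring
      _ = (-((1 / 2 : ℂ) * (Real.exp (2 * ρ z) : ℂ) + 2 * wirtZbar (dZ ρ) z))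
            * pairC (WZ (Fc f) z) (Fc ψ₄ z) := by rw [pairC_def, Finset.mul_sum]
      _ = 0 := by
          rw [pairC_comm' (WZ (Fc f) z) (Fc ψ₄ z), h4b z, mul_zero]
  -- ## frame formula for the ψ₄–component of ∂_z̄ Ω
  have hA : ∀ z, pairC (WZb (Fc ψ₃) z) (Fc ψ₄ z)
      = -(Complex.I * wirtZbar (fun w => ((θ w : ℝ) : ℂ)) z) := by
    intro z
    have hcne : (Real.cosh (θ z) : ℂ) ≠ 0 :=
      Complex.ofReal_ne_zero.mpr (Real.cosh_pos (x := θ z)).ne'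
    have hP4zb4 : pairC (WZb (Fc ψ₄) z) (Fc ψ₄ z) = 0 := by
      have h0 : wirtZbar (fun w => pairC (Fc ψ₄ w) (Fc ψ₄ w)) z = 0 := by
        rw [show (fun w => pairC (Fc ψ₄ w) (Fc ψ₄ w)) = fun _ => (1 : ℂ) from
          funext fun w => hP44 w]
        exact wirtZbar_const 1 z
      rw [wirtZbar_pairC (fun i => (hP4 i).dAt z) (fun i => (hP4 i).dAt z),
        pairC_comm' (Fc ψ₄ z) (WZb (Fc ψ₄) z)] at h0
      linear_combination h0 / 2
    have hdec : ∀ i, WZb (Hopf f ρ) z i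
        = wirtZbar (fun w => ((Real.cosh (θ w) : ℝ) : ℂ)) z * Fc ψ₃ z i
          + (Real.cosh (θ z) : ℂ) * WZb (Fc ψ₃) z i
          + (Complex.I * ((Real.cosh (θ z) : ℂ) * wirtZbar (fun w => ((θ w : ℝ) : ℂ)) z))
              * Fc ψ₄ z i
          + (Complex.I * (Real.sinh (θ z) : ℂ)) * WZb (Fc ψ₄) z i := by
      intro i
      have e0 : WZb (Hopf f ρ) z i
          = wirtZbar (fun w => ((Real.cosh (θ w) : ℝ) : ℂ) * Fc ψ₃ w i
              + Complex.I * (((Real.sinh (θ w) : ℝ) : ℂ) * Fc ψ₄ w i)) z := by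
        rw [show WZb (Hopf f ρ) z i = wirtZbar (fun w => Hopf f ρ w i) z from rfl]
        rw [show (fun w => Hopf f ρ w i)
            = fun w => ((Real.cosh (θ w) : ℝ) : ℂ) * Fc ψ₃ w i
              + Complex.I * (((Real.sinh (θ w) : ℝ) : ℂ) * Fc ψ₄ w i) from
          funext fun w => hΩdec w i]
      rw [e0, wirtZbar_add ((hcosh.dAt z).fun_mul ((hP3 i).dAt z))
          ((differentiableAt_const _).fun_mul ((hsinh.dAt z).fun_mul ((hP4 i).dAt z))),
        wirtZbar_mul (hcosh.dAt z) ((hP3 i).dAt z),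
        wirtZbar_const_mul Complex.I ((hsinh.dAt z).fun_mul ((hP4 i).dAt z)),
        wirtZbar_mul (hsinh.dAt z) ((hP4 i).dAt z), hws z]
      simp only [eWZb]
      ring
    have h1 : pairC (WZb (Hopf f ρ) z) (Fc ψ₄ z)
        = (Real.cosh (θ z) : ℂ) * pairC (WZb (Fc ψ₃) z) (Fc ψ₄ z)
          + Complex.I * ((Real.cosh (θ z) : ℂ) * wirtZbar (fun w => ((θ w : ℝ) : ℂ)) z) := by
      calc pairC (WZb (Hopf f ρ) z) (Fc ψ₄ z)
          = ∑ i, (wirtZbar (fun w => ((Real.cosh (θ w) : ℝ) : ℂ)) z * Fc ψ₃ z i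
              + (Real.cosh (θ z) : ℂ) * WZb (Fc ψ₃) z i
              + (Complex.I * ((Real.cosh (θ z) : ℂ)
                  * wirtZbar (fun w => ((θ w : ℝ) : ℂ)) z)) * Fc ψ₄ z i
              + (Complex.I * (Real.sinh (θ z) : ℂ)) * WZb (Fc ψ₄) z i) * Fc ψ₄ z i := by
            rw [pairC_def]
            exact Finset.sum_congr rfl fun i _ => by rw [hdec i]
        _ = wirtZbar (fun w => ((Real.cosh (θ w) : ℝ) : ℂ)) z * pairC (Fc ψ₃ z) (Fc ψ₄ z)
              + (Real.cosh (θ z) : ℂ) * pairC (WZb (Fc ψ₃) z) (Fc ψ₄ z)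
              + (Complex.I * ((Real.cosh (θ z) : ℂ)
                  * wirtZbar (fun w => ((θ w : ℝ) : ℂ)) z)) * pairC (Fc ψ₄ z) (Fc ψ₄ z)
              + (Complex.I * (Real.sinh (θ z) : ℂ)) * pairC (WZb (Fc ψ₄) z) (Fc ψ₄ z) :=
            sum_comb4 _ _ _ _ _ _ _ _ _
        _ = _ := by rw [hP34 z, hP44 z, hP4zb4]; ring
    have h2 := h1.symm.trans (hCod z)
    refine mul_left_cancel₀ hcne ?_
    linear_combination h2
  -- conjugate : the ∂_z pairing
  have hP3z4 : ∀ z, pairC (WZ (Fc ψ₃) z) (Fc ψ₄ z) = Complex.I * dZ θ z := by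
    intro z
    have hterm : ∀ i, (starRingEnd ℂ) (WZb (Fc ψ₃) z i * Fc ψ₄ z i)
        = WZ (Fc ψ₃) z i * Fc ψ₄ z i := by
      intro i
      rw [map_mul, hconj3 z i]
      exact congrArg _ (Complex.conj_ofReal _)
    have hconjsum : pairC (WZ (Fc ψ₃) z) (Fc ψ₄ z)
        = (starRingEnd ℂ) (pairC (WZb (Fc ψ₃) z) (Fc ψ₄ z)) := by
      rw [pairC_def, pairC_def, map_sum]
      exact Finset.sum_congr rfl fun i _ => (hterm i).symm
    rw [hconjsum, hA z, map_neg, map_mul, Complex.conj_I, hconjθ z]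
    ring
  have hP4z3 : ∀ z, pairC (WZ (Fc ψ₄) z) (Fc ψ₃ z) = -(Complex.I * dZ θ z) := by
    intro z
    have h0 : wirtZ (fun w => pairC (Fc ψ₃ w) (Fc ψ₄ w)) z = 0 := by
      rw [show (fun w => pairC (Fc ψ₃ w) (Fc ψ₄ w)) = fun _ => (0 : ℂ) from
        funext fun w => hP34 w]
      exact wirtZ_const 0 z
    rw [wirtZ_pairC (fun i => (hP3 i).dAt z) (fun i => (hP4 i).dAt z),
      pairC_comm' (Fc ψ₃ z) (WZ (Fc ψ₄) z)] at h0
    linear_combination h0 - hP3z4 z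
  -- ## Claim 1 : i θ_z = -2 e^{-2ρ} ⟨E, f_z̄⟩
  have hclaim1 : ∀ z, Complex.I * dZ θ z
      = -2 * (Real.exp (-2 * ρ z) : ℂ) * pairC (cV E) (WZb (Fc f) z) := by
    intro z
    have hcne : (Real.cosh (θ z) : ℂ) ≠ 0 :=
      Complex.ofReal_ne_zero.mpr (Real.cosh_pos (x := θ z)).ne'
    have hEp : ∀ i, (fun w => Eperp f ρ E w i)
        = fun w => -(((Real.cosh (θ w) : ℝ) : ℂ) * Fc ψ₄ w i) := by
      intro i; funext w; simp only [Fc, cV]; linear_combination hE w i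
    have wEp : ∀ i, wirtZ (fun w => Eperp f ρ E w i) z
        = -(wirtZ (fun w => ((Real.cosh (θ w) : ℝ) : ℂ)) z * Fc ψ₄ z i
            + (Real.cosh (θ z) : ℂ) * WZ (Fc ψ₄) z i) := by
      intro i
      rw [hEp i, wirtZ_neg, wirtZ_mul (hcosh.dAt z) ((hP4 i).dAt z)]
      simp only [eWZ]
    have T1 : ∑ i, wirtZ (fun w => Eperp f ρ E w i) z * Fc ψ₃ z i
        = (Real.cosh (θ z) : ℂ) * (Complex.I * dZ θ z) := by
      calc ∑ i, wirtZ (fun w => Eperp f ρ E w i) z * Fc ψ₃ z i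
          = ∑ i, ((-(wirtZ (fun w => ((Real.cosh (θ w) : ℝ) : ℂ)) z)) * Fc ψ₄ z i
              + (-(Real.cosh (θ z) : ℂ)) * WZ (Fc ψ₄) z i) * Fc ψ₃ z i :=
            Finset.sum_congr rfl fun i _ => by rw [wEp i]; ring
        _ = (-(wirtZ (fun w => ((Real.cosh (θ w) : ℝ) : ℂ)) z)) * pairC (Fc ψ₄ z) (Fc ψ₃ z)
              + (-(Real.cosh (θ z) : ℂ)) * pairC (WZ (Fc ψ₄) z) (Fc ψ₃ z) :=
            sum_comb2 _ _ _ _ _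
        _ = _ := by
            rw [pairC_comm' (Fc ψ₄ z) (Fc ψ₃ z), hP34 z, hP4z3 z]; ring
    have hEpdef : ∀ i, (fun w => Eperp f ρ E w i)
        = fun w => (E i : ℂ)
            - pairC (cV E) (Fc f w) * Fc f w i
            - 2 * ((Real.exp (-2 * ρ w) : ℝ) : ℂ) * pairC (cV E) (WZ (Fc f) w) * WZb (Fc f) w i
            - 2 * ((Real.exp (-2 * ρ w) : ℝ) : ℂ) * pairC (cV E) (WZb (Fc f) w) * WZ (Fc f) w i :=
      fun i => rfl
    have wEp2 : ∀ i, wirtZ (fun w => Eperp f ρ E w i) z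
        = (-(wirtZ (fun w => pairC (cV E) (Fc f w)) z)) * Fc f z i
          + (-(pairC (cV E) (Fc f z))) * WZ (Fc f) z i
          + (-(wirtZ (fun w => 2 * ((Real.exp (-2 * ρ w) : ℝ) : ℂ)
              * pairC (cV E) (WZ (Fc f) w)) z)) * WZb (Fc f) z i
          + (-(2 * ((Real.exp (-2 * ρ z) : ℝ) : ℂ) * pairC (cV E) (WZ (Fc f) z)))
              * WZ (WZb (Fc f)) z i
          + (-(wirtZ (fun w => 2 * ((Real.exp (-2 * ρ w) : ℝ) : ℂ)
              * pairC (cV E) (WZb (Fc f) w)) z)) * WZ (Fc f) z i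
          + (-(2 * ((Real.exp (-2 * ρ z) : ℝ) : ℂ) * pairC (cV E) (WZb (Fc f) z)))
              * WZ (WZ (Fc f)) z i := by
      intro i
      have d1 : DifferentiableAt ℝ (fun w => pairC (cV E) (Fc f w) * Fc f w i) z :=
        (haC.dAt z).mul ((hF i).dAt z)
      have dB : DifferentiableAt ℝ
          (fun w => 2 * ((Real.exp (-2 * ρ w) : ℝ) : ℂ) * pairC (cV E) (WZ (Fc f) w)) z :=
        ((contDiff_const.mul hex).mul ha1C).dAt z
      have dC : DifferentiableAt ℝ
          (fun w => 2 * ((Real.exp (-2 * ρ w) : ℝ) : ℂ) * pairC (cV E) (WZb (Fc f) w)) z :=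
        ((contDiff_const.mul hex).mul ha2C).dAt z
      have d2 : DifferentiableAt ℝ (fun w => 2 * ((Real.exp (-2 * ρ w) : ℝ) : ℂ)
          * pairC (cV E) (WZ (Fc f) w) * WZb (Fc f) w i) z := dB.mul ((hFzb i).dAt z)
      have d3 : DifferentiableAt ℝ (fun w => 2 * ((Real.exp (-2 * ρ w) : ℝ) : ℂ)
          * pairC (cV E) (WZb (Fc f) w) * WZ (Fc f) w i) z := dC.mul ((hFz i).dAt z)
      rw [hEpdef i, wirtZ_sub (((differentiableAt_const _).fun_sub d1).fun_sub d2) d3,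
        wirtZ_sub ((differentiableAt_const _).fun_sub d1) d2,
        wirtZ_sub (differentiableAt_const _) d1,
        wirtZ_const, wirtZ_mul (haC.dAt z) ((hF i).dAt z),
        wirtZ_mul dB ((hFzb i).dAt z), wirtZ_mul dC ((hFz i).dAt z)]
      simp only [eWZ]
      ring
    have hv4 : pairC (WZ (WZb (Fc f)) z) (Fc ψ₃ z) = 0 := by
      rw [pairC_comm',
        show WZ (WZb (Fc f)) z = fun i => -(1 / 2 : ℂ) * (Real.exp (2 * ρ z) : ℂ) * Fc f z i
          from funext fun i => hWZWZb z i, pairC_smul_right, h3a z, mul_zero]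
    have hv6 : pairC (WZ (WZ (Fc f)) z) (Fc ψ₃ z) = (Real.cosh (θ z) : ℂ) := by
      have h0 := hΩv z (Fc ψ₃ z)
      rw [hΩP3 z, show pairC (WZ (Fc f) z) (Fc ψ₃ z) = 0 from
        (pairC_comm' _ _).trans (h3b z)] at h0
      linear_combination -h0
    have hv1 : pairC (Fc f z) (Fc ψ₃ z) = 0 := (pairC_comm' _ _).trans (h3a z)
    have hv2 : pairC (WZ (Fc f) z) (Fc ψ₃ z) = 0 := (pairC_comm' _ _).trans (h3b z)
    have hv3 : pairC (WZb (Fc f) z) (Fc ψ₃ z) = 0 := (pairC_comm' _ _).trans (h3c z)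
    have T2 : ∑ i, wirtZ (fun w => Eperp f ρ E w i) z * Fc ψ₃ z i
        = (-(2 * ((Real.exp (-2 * ρ z) : ℝ) : ℂ) * pairC (cV E) (WZb (Fc f) z)))
            * (Real.cosh (θ z) : ℂ) := by
      calc ∑ i, wirtZ (fun w => Eperp f ρ E w i) z * Fc ψ₃ z i
          = ∑ i, ((-(wirtZ (fun w => pairC (cV E) (Fc f w)) z)) * Fc f z i
              + (-(pairC (cV E) (Fc f z))) * WZ (Fc f) z i
              + (-(wirtZ (fun w => 2 * ((Real.exp (-2 * ρ w) : ℝ) : ℂ)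
                  * pairC (cV E) (WZ (Fc f) w)) z)) * WZb (Fc f) z i
              + (-(2 * ((Real.exp (-2 * ρ z) : ℝ) : ℂ) * pairC (cV E) (WZ (Fc f) z)))
                  * WZ (WZb (Fc f)) z i
              + (-(wirtZ (fun w => 2 * ((Real.exp (-2 * ρ w) : ℝ) : ℂ)
                  * pairC (cV E) (WZb (Fc f) w)) z)) * WZ (Fc f) z i
              + (-(2 * ((Real.exp (-2 * ρ z) : ℝ) : ℂ) * pairC (cV E) (WZb (Fc f) z)))
                  * WZ (WZ (Fc f)) z i) * Fc ψ₃ z i :=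
            Finset.sum_congr rfl fun i _ => by rw [wEp2 i]
        _ = (-(wirtZ (fun w => pairC (cV E) (Fc f w)) z)) * pairC (Fc f z) (Fc ψ₃ z)
              + (-(pairC (cV E) (Fc f z))) * pairC (WZ (Fc f) z) (Fc ψ₃ z)
              + (-(wirtZ (fun w => 2 * ((Real.exp (-2 * ρ w) : ℝ) : ℂ)
                  * pairC (cV E) (WZ (Fc f) w)) z)) * pairC (WZb (Fc f) z) (Fc ψ₃ z)
              + (-(2 * ((Real.exp (-2 * ρ z) : ℝ) : ℂ) * pairC (cV E) (WZ (Fc f) z)))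
                  * pairC (WZ (WZb (Fc f)) z) (Fc ψ₃ z)
              + (-(wirtZ (fun w => 2 * ((Real.exp (-2 * ρ w) : ℝ) : ℂ)
                  * pairC (cV E) (WZb (Fc f) w)) z)) * pairC (WZ (Fc f) z) (Fc ψ₃ z)
              + (-(2 * ((Real.exp (-2 * ρ z) : ℝ) : ℂ) * pairC (cV E) (WZb (Fc f) z)))
                  * pairC (WZ (WZ (Fc f)) z) (Fc ψ₃ z) :=
            sum_comb6 _ _ _ _ _ _ _ _ _ _ _ _ _
        _ = _ := by rw [hv1, hv2, hv3, hv4, hv6]; ring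
    have hTT := T1.symm.trans T2
    refine mul_left_cancel₀ hcne ?_
    linear_combination hTT
  -- ## Claim 2 : i (θ_zz + 2 ρ_z θ_z) = ⟨E, f⟩
  have hclaim2 : ∀ z, Complex.I * (wirtZ (dZ θ) z + 2 * dZ ρ z * dZ θ z)
      = pairC (cV E) (Fc f z) := by
    intro z
    have hfun : (fun w => Complex.I * dZ θ w)
        = fun w => -2 * ((Real.exp (-2 * ρ w) : ℝ) : ℂ) * pairC (cV E) (WZb (Fc f) w) :=
      funext fun w => hclaim1 w
    have hder : wirtZ (fun w => Complex.I * dZ θ w) z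
        = wirtZ (fun w => -2 * ((Real.exp (-2 * ρ w) : ℝ) : ℂ)
            * pairC (cV E) (WZb (Fc f) w)) z := by rw [hfun]
    rw [wirtZ_const_mul Complex.I (hdθ.dAt z),
      wirtZ_mul ((contDiff_const.mul hex).dAt z) (ha2C.dAt z),
      wirtZ_const_mul (-2 : ℂ) (hex.dAt z), hwex z] at hder
    have ha2' : wirtZ (fun w => pairC (cV E) (WZb (Fc f) w)) z
        = -(1 / 2 : ℂ) * (Real.exp (2 * ρ z) : ℂ) * pairC (cV E) (Fc f z) := by
      calc wirtZ (fun w => pairC (cV E) (WZb (Fc f) w)) z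
          = ∑ i, wirtZ (fun w => cV E i * WZb (Fc f) w i) z :=
            wirtZ_sum fun i => (differentiableAt_const _).mul ((hFzb i).dAt z)
        _ = ∑ i, (-(1 / 2 : ℂ) * (Real.exp (2 * ρ z) : ℂ)) * (cV E i * Fc f z i) :=
            Finset.sum_congr rfl fun i _ => by
              rw [wirtZ_const_mul _ ((hFzb i).dAt z)]
              simp only [eWZ]
              rw [hWZWZb z i]; ring
        _ = -(1 / 2 : ℂ) * (Real.exp (2 * ρ z) : ℂ) * pairC (cV E) (Fc f z) := by
            rw [← Finset.mul_sum, pairC_def]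
    rw [ha2'] at hder
    have hexinv : ((Real.exp (-2 * ρ z) : ℝ) : ℂ) * ((Real.exp (2 * ρ z) : ℝ) : ℂ) = 1 := by
      rw [← Complex.ofReal_mul, ← Real.exp_add]
      norm_num
    linear_combination hder + 2 * dZ ρ z * hclaim1 z + pairC (cV E) (Fc f z) * hexinv
  -- ## conclusion
  intro z
  refine ⟨hclaim1 z, hclaim2 z, ?_⟩
  have haim : (pairC (cV E) (Fc f z)).im = 0 := by
    have h1 : pairC (cV E) (Fc f z) = ((∑ i, E i * f z i : ℝ) : ℂ) := ofReal_pair E (f z)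
    rw [h1]
    exact Complex.ofReal_im _
  have h3 := congrArg Complex.im (hclaim2 z)
  simp only [Complex.mul_im, Complex.I_re, Complex.I_im, zero_mul, one_mul, zero_add] at h3
  rw [h3]
  exact haim
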